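/- arXiv:2402.04010 — 2 statements merged into one kernel-verified Lean document; each statement's English description precedes it below -/
import Mathlib

section
/- Let h(z) = Wz + b with W ∈ ℝ^{n×n} having largest singular value σ₁, and let u, v ∈ ℝⁿ be unit vectors. If ‖h(u) − e_y‖ < δ and ‖h(v) − e_{y'}‖ < δ for distinct standard basis vectors e_y ≠ e_{y'} and 0 < δ < √2/2, then ⟨u, v⟩ < 1 − (√2 − 2δ)²/(2σ₁²). -/
open scoped RealInnerProductSpace

/-!
The images `h u`, `h v` lie within `δ` of two standard basis vectors, which are `√2` apart,
so `‖h u - h v‖ > √2 - 2δ`. Since `h u - h v = W (u - v)` and `W` stretches by at most `σ₁`,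
this forces `‖u - v‖ > (√2 - 2δ) / σ₁`, and for unit vectors `⟪u, v⟫ = 1 - ‖u - v‖² / 2`.
-/

theorem Orthonormal.norm_sub_eq_sqrt_two {ι F : Type*} [SeminormedAddCommGroup F]
    [InnerProductSpace ℝ F] {e : ι → F} (he : Orthonormal ℝ e) {i j : ι} (hij : i ≠ j) :
    ‖e i - e j‖ = √2 := by
  rw [← Real.sqrt_sq (norm_nonneg _), norm_sub_sq_real, he.inner_eq_zero hij, he.1 i, he.1 j]
  norm_num

theorem real_inner_eq_one_sub_norm_sub_sq_div_two {F : Type*} [SeminormedAddCommGroup F]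
    [InnerProductSpace ℝ F] {u v : F} (hu : ‖u‖ = 1) (hv : ‖v‖ = 1) :
    ⟪u, v⟫ = 1 - ‖u - v‖ ^ 2 / 2 := by
  rw [norm_sub_sq_real, hu, hv]
  ring

theorem norm_sub_sub_two_mul_lt_norm_sub {E : Type*} [SeminormedAddCommGroup E]
    {a b p q : E} {δ : ℝ} (hap : ‖a - p‖ < δ) (hbq : ‖b - q‖ < δ) :
    ‖p - q‖ - 2 * δ < ‖a - b‖ := by
  have hpq : ‖p - q‖ ≤ ‖a - p‖ + ‖a - b‖ + ‖b - q‖ := by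
    simpa only [dist_eq_norm, norm_sub_rev p a] using dist_triangle4 p a b q
  linarith

theorem separated_of_close_to_distinct_basis_general {n : ℕ}
    (W : Matrix (Fin n) (Fin n) ℝ)
    (b : EuclideanSpace ℝ (Fin n))
    (σ1 : ℝ)
    (hup : ∀ z : EuclideanSpace ℝ (Fin n), ‖Matrix.toEuclideanLin W z‖ ≤ σ1 * ‖z‖)
    (h : EuclideanSpace ℝ (Fin n) → EuclideanSpace ℝ (Fin n))
    (hh : ∀ z, h z = Matrix.toEuclideanLin W z + b)
    (u v : EuclideanSpace ℝ (Fin n)) (hu : ‖u‖ = 1) (hv : ‖v‖ = 1)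
    (y y' : Fin n) (hyy' : y ≠ y')
    (δ : ℝ) (hδ : δ < Real.sqrt 2 / 2)
    (hu' : ‖h u - EuclideanSpace.single y (1 : ℝ)‖ < δ)
    (hv' : ‖h v - EuclideanSpace.single y' (1 : ℝ)‖ < δ) :
    ⟪u, v⟫ < 1 - (Real.sqrt 2 - 2 * δ) ^ 2 / (2 * σ1 ^ 2) := by
  have hgap : √2 - 2 * δ < ‖h u - h v‖ := by
    simpa [EuclideanSpace.orthonormal_single.norm_sub_eq_sqrt_two hyy'] using
      norm_sub_sub_two_mul_lt_norm_sub hu' hv'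
  have hlip : ‖h u - h v‖ ≤ σ1 * ‖u - v‖ := by
    rw [hh, hh, add_sub_add_right_eq_sub, ← map_sub]
    exact hup _
  have hgap_pos : 0 < √2 - 2 * δ := by linarith
  have hσ1 : 0 < σ1 :=
    pos_of_mul_pos_left (hgap_pos.trans_le (hgap.le.trans hlip)) (norm_nonneg _)
  have hsep : (√2 - 2 * δ) / σ1 < ‖u - v‖ := (div_lt_iff₀' hσ1).2 (hgap.trans_le hlip)
  rw [real_inner_eq_one_sub_norm_sub_sq_div_two hu hv,
    show (√2 - 2 * δ) ^ 2 / (2 * σ1 ^ 2) = ((√2 - 2 * δ) / σ1) ^ 2 / 2 by ring]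
  gcongr

/-- If the affine images `h(u), h(v)` are `δ`-close to distinct standard basis
vectors, then the unit vectors `u, v` are separated:
`⟪u,v⟫ < 1 - (√2 - 2δ)²/(2σ₁²)`. -/
theorem separated_of_close_to_distinct_basis {n : ℕ}
    (W : Matrix (Fin n) (Fin n) ℝ)
    (b : EuclideanSpace ℝ (Fin n))
    (σ1 : ℝ) (hσ1 : 0 < σ1)
    (hup : ∀ z : EuclideanSpace ℝ (Fin n), ‖Matrix.toEuclideanLin W z‖ ≤ σ1 * ‖z‖)
    (h : EuclideanSpace ℝ (Fin n) → EuclideanSpace ℝ (Fin n))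
    (hh : ∀ z, h z = Matrix.toEuclideanLin W z + b)
    (u v : EuclideanSpace ℝ (Fin n)) (hu : ‖u‖ = 1) (hv : ‖v‖ = 1)
    (y y' : Fin n) (hyy' : y ≠ y')
    (δ : ℝ) (hδ0 : 0 < δ) (hδ : δ < Real.sqrt 2 / 2)
    (hu' : ‖h u - EuclideanSpace.single y (1 : ℝ)‖ < δ)
    (hv' : ‖h v - EuclideanSpace.single y' (1 : ℝ)‖ < δ) :
    ⟪u, v⟫ < 1 - (Real.sqrt 2 - 2 * δ) ^ 2 / (2 * σ1 ^ 2) :=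
  separated_of_close_to_distinct_basis_general W b σ1 hup h hh u v hu hv y y' hyy' δ hδ hu' hv'
end

section
/- Let g : ℝᵈ → ℝⁿ satisfy ‖g(x)‖ = 1 for all x, let h(z) = Wz + b with W invertible with smallest singular value σₙ > 0, and let (x, y) be a random sample with data augmentations π, τ drawn i.i.d. If E[(1/n)‖h(g(π(x))) − e_y‖²] ≤ ε (the expectation over the joint draw), then with probability at least 1 − 2√ε over (x, π, τ), the feature alignment satisfies ⟨g(π(x)), g(τ(x))⟩ > 1 − 2n√ε/σₙ². -/
open MeasureTheory
open scoped RealInnerProductSpace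

/-- Pointwise step: small errors for both views imply feature alignment. -/
lemma pointwise_alignment {n : ℕ} (hn : 0 < n)
    (W : Matrix (Fin n) (Fin n) ℝ)
    (b : EuclideanSpace ℝ (Fin n))
    (h : EuclideanSpace ℝ (Fin n) → EuclideanSpace ℝ (Fin n))
    (hh : ∀ z, h z = Matrix.toEuclideanLin W z + b)
    (σn : ℝ) (hσn : 0 < σn)
    (hlow : ∀ z : EuclideanSpace ℝ (Fin n), σn * ‖z‖ ≤ ‖Matrix.toEuclideanLin W z‖)
    (c : ℝ) (hc : 0 < c)
    (u v e : EuclideanSpace ℝ (Fin n)) (hu : ‖u‖ = 1) (hv : ‖v‖ = 1)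
    (hA : ‖h u - e‖ ^ 2 < (n : ℝ) * c) (hB : ‖h v - e‖ ^ 2 < (n : ℝ) * c) :
    ⟪u, v⟫ > 1 - 2 * (n : ℝ) * c / σn ^ 2 := by
  have hnc : (0 : ℝ) < (n : ℝ) * c := by positivity
  set s : ℝ := Real.sqrt ((n : ℝ) * c) with hs
  have hs2 : s ^ 2 = (n : ℝ) * c := Real.sq_sqrt hnc.le
  have haA : ‖h u - e‖ < s := by
    rw [hs]; exact (Real.lt_sqrt (norm_nonneg _)).2 hA
  have haB : ‖h v - e‖ < s := by
    rw [hs]; exact (Real.lt_sqrt (norm_nonneg _)).2 hB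
  have hsub : h u - h v = Matrix.toEuclideanLin W (u - v) := by
    rw [hh, hh, map_sub]; abel
  have htri : ‖Matrix.toEuclideanLin W (u - v)‖ < 2 * s := by
    rw [← hsub]
    calc ‖h u - h v‖ = ‖(h u - e) - (h v - e)‖ := by abel_nf
      _ ≤ ‖h u - e‖ + ‖h v - e‖ := norm_sub_le _ _
      _ < 2 * s := by linarith
  have hσuv : σn * ‖u - v‖ < 2 * s := lt_of_le_of_lt (hlow _) htri
  have hsq : (σn * ‖u - v‖) ^ 2 < (2 * s) ^ 2 := by
    have h1 : 0 ≤ σn * ‖u - v‖ := by positivity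
    nlinarith
  have hnormsq : ‖u - v‖ ^ 2 < 4 * ((n : ℝ) * c) / σn ^ 2 := by
    rw [lt_div_iff₀ (by positivity : (0:ℝ) < σn ^ 2)]
    nlinarith [hsq, hs2]
  have hid : ‖u - v‖ ^ 2 = 2 - 2 * ⟪u, v⟫ := by
    rw [norm_sub_sq_real, hu, hv]; ring
  rw [hid] at hnormsq
  have e2 : 2 * (n : ℝ) * c / σn ^ 2 = (4 * ((n : ℝ) * c) / σn ^ 2) / 2 := by ring
  rw [gt_iff_lt, e2]
  linarith

/-- Lemma A.3 (corrected exponent): if the supervised MSE risk of the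
augmented copies is at most `ε`, then with probability at least `1 - 2√ε`
the features of the two augmented views are aligned:
`⟪g(π(x)), g(τ(x))⟫ > 1 - 2n√ε/σₙ²`. -/
theorem feature_alignment_of_small_risk
    {Ω : Type*} [MeasurableSpace Ω] (ℙ : Measure Ω) [IsProbabilityMeasure ℙ]
    {d n : ℕ} (hn : 0 < n)
    (g : EuclideanSpace ℝ (Fin d) → EuclideanSpace ℝ (Fin n))
    (hg : ∀ x, ‖g x‖ = 1)
    (W : Matrix (Fin n) (Fin n) ℝ) (hWinv : IsUnit W)
    (b : EuclideanSpace ℝ (Fin n))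
    (h : EuclideanSpace ℝ (Fin n) → EuclideanSpace ℝ (Fin n))
    (hh : ∀ z, h z = Matrix.toEuclideanLin W z + b)
    (σn : ℝ) (hσn : 0 < σn)
    (hlow : ∀ z : EuclideanSpace ℝ (Fin n), σn * ‖z‖ ≤ ‖Matrix.toEuclideanLin W z‖)
    -- the two augmented copies `π(x)`, `τ(x)` and the label of `x`
    (A B : Ω → EuclideanSpace ℝ (Fin d)) (Y : Ω → Fin n)
    (hA : Measurable A) (hB : Measurable B) (hY : Measurable Y)
    (ε : ℝ) (hε : 0 < ε)
    (hintA : Integrable (fun ω =>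
      (1 / (n : ℝ)) * ‖h (g (A ω)) - EuclideanSpace.single (Y ω) (1 : ℝ)‖ ^ 2) ℙ)
    (hintB : Integrable (fun ω =>
      (1 / (n : ℝ)) * ‖h (g (B ω)) - EuclideanSpace.single (Y ω) (1 : ℝ)‖ ^ 2) ℙ)
    (hriskA : ∫ ω, (1 / (n : ℝ)) *
      ‖h (g (A ω)) - EuclideanSpace.single (Y ω) (1 : ℝ)‖ ^ 2 ∂ℙ ≤ ε)
    (hriskB : ∫ ω, (1 / (n : ℝ)) *
      ‖h (g (B ω)) - EuclideanSpace.single (Y ω) (1 : ℝ)‖ ^ 2 ∂ℙ ≤ ε) :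
    ℙ {ω | ⟪g (A ω), g (B ω)⟫ >
        1 - 2 * (n : ℝ) * Real.sqrt ε / σn ^ 2} ≥
      1 - 2 * ENNReal.ofReal (Real.sqrt ε) := by
  set c : ℝ := Real.sqrt ε with hcdef
  have hc : 0 < c := Real.sqrt_pos.2 hε
  have hnpos : (0 : ℝ) < (n : ℝ) := by exact_mod_cast hn
  have key : ∀ (F : Ω → EuclideanSpace ℝ (Fin d)),
      Integrable (fun ω =>
        (1 / (n : ℝ)) * ‖h (g (F ω)) - EuclideanSpace.single (Y ω) (1 : ℝ)‖ ^ 2) ℙ →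
      (∫ ω, (1 / (n : ℝ)) *
        ‖h (g (F ω)) - EuclideanSpace.single (Y ω) (1 : ℝ)‖ ^ 2 ∂ℙ ≤ ε) →
      ℙ {ω | c ≤ (1 / (n : ℝ)) *
        ‖h (g (F ω)) - EuclideanSpace.single (Y ω) (1 : ℝ)‖ ^ 2} ≤ ENNReal.ofReal c := by
    intro F hint hrisk
    set f : Ω → ℝ := fun ω =>
      (1 / (n : ℝ)) * ‖h (g (F ω)) - EuclideanSpace.single (Y ω) (1 : ℝ)‖ ^ 2 with hf
    have hnonneg : 0 ≤ᵐ[ℙ] f := ae_of_all _ (fun ω => by positivity)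
    have hmark := mul_meas_ge_le_integral_of_nonneg hnonneg hint c
    have hfin : ℙ {ω | c ≤ f ω} ≠ ⊤ := measure_ne_top _ _
    have htoReal : (ℙ {ω | c ≤ f ω}).toReal ≤ c := by
      have h1 : c * (ℙ {ω | c ≤ f ω}).toReal ≤ ε := le_trans hmark hrisk
      have h2 : ε = c * c := (Real.mul_self_sqrt hε.le).symm
      rw [h2] at h1
      exact le_of_mul_le_mul_left h1 hc
    calc ℙ {ω | c ≤ f ω} = ENNReal.ofReal ((ℙ {ω | c ≤ f ω}).toReal) :=
          (ENNReal.ofReal_toReal hfin).symm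
      _ ≤ ENNReal.ofReal c := ENNReal.ofReal_le_ofReal htoReal
  have hkA := key A hintA hriskA
  have hkB := key B hintB hriskB
  set S : Set Ω := {ω | ⟪g (A ω), g (B ω)⟫ > 1 - 2 * (n : ℝ) * c / σn ^ 2} with hS
  set TA : Set Ω := {ω | c ≤ (1 / (n : ℝ)) *
      ‖h (g (A ω)) - EuclideanSpace.single (Y ω) (1 : ℝ)‖ ^ 2} with hTA
  set TB : Set Ω := {ω | c ≤ (1 / (n : ℝ)) *
      ‖h (g (B ω)) - EuclideanSpace.single (Y ω) (1 : ℝ)‖ ^ 2} with hTB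
  have hsubset : Sᶜ ⊆ TA ∪ TB := by
    intro ω hω
    by_contra hcon
    rw [Set.mem_union, not_or] at hcon
    obtain ⟨hωA, hωB⟩ := hcon
    rw [hTA, Set.mem_setOf_eq] at hωA
    rw [hTB, Set.mem_setOf_eq] at hωB
    apply hω
    rw [hS, Set.mem_setOf_eq]
    have h1 : ‖h (g (A ω)) - EuclideanSpace.single (Y ω) (1 : ℝ)‖ ^ 2 < (n : ℝ) * c := by
      have h1' := lt_of_not_ge hωA
      rw [one_div, inv_mul_lt_iff₀ hnpos] at h1'
      exact h1'
    have h2 : ‖h (g (B ω)) - EuclideanSpace.single (Y ω) (1 : ℝ)‖ ^ 2 < (n : ℝ) * c := by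
      have h2' := lt_of_not_ge hωB
      rw [one_div, inv_mul_lt_iff₀ hnpos] at h2'
      exact h2'
    exact pointwise_alignment hn W b h hh σn hσn hlow c hc _ _ _
      (hg (A ω)) (hg (B ω)) h1 h2
  have hcompl : ℙ Sᶜ ≤ 2 * ENNReal.ofReal c := by
    calc ℙ Sᶜ ≤ ℙ (TA ∪ TB) := measure_mono hsubset
      _ ≤ ℙ TA + ℙ TB := measure_union_le _ _
      _ ≤ ENNReal.ofReal c + ENNReal.ofReal c := add_le_add hkA hkB
      _ = 2 * ENNReal.ofReal c := by ring
  have hone : (1 : ENNReal) ≤ ℙ S + 2 * ENNReal.ofReal c := by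
    calc (1 : ENNReal) = ℙ Set.univ := (measure_univ (μ := ℙ)).symm
      _ = ℙ (S ∪ Sᶜ) := by rw [Set.union_compl_self]
      _ ≤ ℙ S + ℙ Sᶜ := measure_union_le _ _
      _ ≤ ℙ S + 2 * ENNReal.ofReal c := add_le_add le_rfl hcompl
  exact tsub_le_iff_right.2 hone
end
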